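/- For the cycle C_n on n ≥ 3 vertices, γ_R(C_n) = ⌈2n/3⌉. -/

import Mathlib

open SimpleGraph Finset

/-- A Roman dominating function: values in {0,1,2}, every 0-vertex has a neighbor with value 2. -/
def IsRDF {V : Type*} (G : SimpleGraph V) (f : V → ℕ) : Prop :=
  (∀ v, f v ≤ 2) ∧ ∀ v, f v = 0 → ∃ u, G.Adj v u ∧ f u = 2

/-- The Roman domination number: minimum weight of a Roman dominating function. -/
noncomputable def romanDom {V : Type*} [Fintype V] (G : SimpleGraph V) : ℕ :=
  sInf {k | ∃ f : V → ℕ, IsRDF G f ∧ ∑ v, f v = k}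

/-- A dominating set. -/
def IsDomSet {V : Type*} (G : SimpleGraph V) (S : Set V) : Prop :=
  ∀ v, v ∈ S ∨ ∃ u ∈ S, G.Adj u v

/-- The domination number. -/
noncomputable def domNum {V : Type*} [Fintype V] (G : SimpleGraph V) : ℕ :=
  sInf {k | ∃ S : Set V, IsDomSet G S ∧ S.ncard = k}

/-- Degree of a vertex. -/
noncomputable def deg {V : Type*} (G : SimpleGraph V) (v : V) : ℕ :=
  (G.neighborSet v).ncard

/-- Maximum degree. -/
noncomputable def maxDeg {V : Type*} (G : SimpleGraph V) : ℕ :=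
  sSup {d | ∃ v, deg G v = d}

/-- Minimum degree. -/
noncomputable def minDeg {V : Type*} (G : SimpleGraph V) : ℕ :=
  sInf {d | ∃ v, deg G v = d}

/-- The Roman bondage number: minimum size of an edge set whose deletion increases `romanDom`. -/
noncomputable def romanBondage {V : Type*} [Fintype V] (G : SimpleGraph V) : ℕ :=
  sInf {k | ∃ B : Set (Sym2 V), B ⊆ G.edgeSet ∧
    romanDom (G.deleteEdges B) > romanDom G ∧ B.ncard = k}

/-- The bondage number: minimum size of an edge set whose deletion increases `domNum`. -/
noncomputable def bondage {V : Type*} [Fintype V] (G : SimpleGraph V) : ℕ :=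
  sInf {k | ∃ B : Set (Sym2 V), B ⊆ G.edgeSet ∧
    domNum (G.deleteEdges B) > domNum G ∧ B.ncard = k}

/-- A vertex cover. -/
def IsVC {V : Type*} (G : SimpleGraph V) (S : Set V) : Prop :=
  ∀ u v, G.Adj u v → u ∈ S ∨ v ∈ S

/-- The vertex covering number. -/
noncomputable def vcNum {V : Type*} [Fintype V] (G : SimpleGraph V) : ℕ :=
  sInf {k | ∃ S : Set V, IsVC G S ∧ S.ncard = k}

/-! Lower bound: in a graph of maximum degree `d ≥ 1`, a Roman dominating function with `n₀`, `n₁`,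
`n₂` vertices of value `0`, `1`, `2` has `n₀ ≤ d n₂`, whence `2n ≤ (d + 1)(n₁ + 2n₂)`; for the
cycle `d = 2`. Upper bound: the path `P_n` is a spanning subgraph of `C_n`, and a Roman dominating
function of weight `⌈2n/3⌉` on `P_n` is explicit. -/

theorem IsRDF.mono {V : Type*} {G H : SimpleGraph V} (hGH : G ≤ H) {f : V → ℕ}
    (hf : IsRDF G f) : IsRDF H f :=
  ⟨hf.1, fun v hv => (hf.2 v hv).imp fun _ hu => ⟨hGH hu.1, hu.2⟩⟩

section RomanDomination

variable {V : Type*} [Fintype V] {G H : SimpleGraph V}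

theorem romanDom_le_sum {f : V → ℕ} (hf : IsRDF G f) : romanDom G ≤ ∑ v, f v :=
  Nat.sInf_le ⟨f, hf, rfl⟩

theorem exists_isRDF_sum_eq_romanDom (G : SimpleGraph V) :
    ∃ f : V → ℕ, IsRDF G f ∧ ∑ v, f v = romanDom G := by
  have hne : {k | ∃ f : V → ℕ, IsRDF G f ∧ ∑ v, f v = k}.Nonempty :=
    ⟨_, fun _ => 1, ⟨fun _ => one_le_two, fun _ h => absurd h one_ne_zero⟩, rfl⟩
  exact Nat.sInf_mem hne

theorem romanDom_anti (hGH : G ≤ H) : romanDom H ≤ romanDom G := by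
  obtain ⟨f, hf, hsum⟩ := exists_isRDF_sum_eq_romanDom G
  exact hsum ▸ romanDom_le_sum (hf.mono hGH)

variable [DecidableRel G.Adj]

theorem two_mul_card_le_mul_sum_of_isRDF {d : ℕ} (hd : ∀ v, G.degree v ≤ d) (hd1 : 1 ≤ d)
    {f : V → ℕ} (hf : IsRDF G f) : 2 * Fintype.card V ≤ (d + 1) * ∑ v, f v := by
  classical
  set V₀ := univ.filter fun v => f v = 0
  set V₂ := univ.filter fun v => f v = 2
  set P := univ.filter fun v => f v ≠ 0
  have hV₀ : #V₀ ≤ d * #V₂ := by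
    have hsub : V₀ ⊆ V₂.biUnion fun u => G.neighborFinset u := by
      intro v hv
      obtain ⟨u, hvu, hu⟩ := hf.2 v (mem_filter.1 hv).2
      exact mem_biUnion.2 ⟨u, mem_filter.2 ⟨mem_univ u, hu⟩, (G.mem_neighborFinset u v).2 hvu.symm⟩
    calc #V₀ ≤ ∑ u ∈ V₂, G.degree u := (card_le_card hsub).trans card_biUnion_le
      _ ≤ ∑ _u ∈ V₂, d := sum_le_sum fun u _ => hd u
      _ = d * #V₂ := by rw [sum_const, smul_eq_mul, mul_comm]
  have hcard : #V₀ + #P = Fintype.card V := card_filter_add_card_filter_not _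
  have hsum : ∑ v, f v = #P + #V₂ := by
    rw [card_filter, card_filter, ← sum_add_distrib]
    refine sum_congr rfl fun v _ => ?_
    have := hf.1 v
    split_ifs <;> omega
  have hV₂P : #V₂ ≤ #P := card_le_card (monotone_filter_right _ fun v h => by simp_all)
  rw [hsum, ← hcard]
  nlinarith

theorem two_mul_card_le_mul_romanDom {d : ℕ} (hd : ∀ v, G.degree v ≤ d) (hd1 : 1 ≤ d) :
    2 * Fintype.card V ≤ (d + 1) * romanDom G := by
  obtain ⟨f, hf, hsum⟩ := exists_isRDF_sum_eq_romanDom G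
  exact hsum ▸ two_mul_card_le_mul_sum_of_isRDF hd hd1 hf

end RomanDomination

theorem cycleGraph_degree_le_two {n : ℕ} (v : Fin n) : (cycleGraph n).degree v ≤ 2 := by
  rcases n with _ | _ | n
  · exact v.elim0
  · simp [SimpleGraph.degree]
  · exact cycleGraph_degree_two_le.trans_le card_le_two

/-- Value `2` on the vertices `1, 4, 7, …` of the path `0 – 1 – ⋯ – (n-1)`; when `n ≡ 1 (mod 3)`
the last vertex has no such neighbour and gets value `1`. -/
def pathRomanFun (n i : ℕ) : ℕ :=
  if i % 3 = 1 then 2 else if i % 3 = 0 ∧ i + 1 = n then 1 else 0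

theorem isRDF_pathRomanFun (n : ℕ) : IsRDF (pathGraph n) fun v => pathRomanFun n v := by
  refine ⟨fun v => by dsimp only [pathRomanFun]; split_ifs <;> omega, fun v hv => ?_⟩
  dsimp only [pathRomanFun] at hv
  split_ifs at hv
  have hv' := v.isLt
  obtain ⟨u, hu⟩ : ∃ u : Fin n, u.val % 3 = 1 ∧ (u.val + 1 = v.val ∨ v.val + 1 = u.val) := by
    by_cases h₂ : v.val % 3 = 2
    · exact ⟨⟨v.val - 1, by omega⟩, by dsimp only; omega⟩
    · exact ⟨⟨v.val + 1, by omega⟩, by dsimp only; omega⟩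
  exact ⟨u, pathGraph_adj.2 hu.2.symm, if_pos hu.1⟩

theorem sum_range_pathRomanFun (n : ℕ) : ∑ i ∈ range n, pathRomanFun n i = (2 * n + 2) / 3 := by
  have hsum : ∀ m, ∑ i ∈ range m, (if i % 3 = 1 then 2 else 0) = 2 * ((m + 1) / 3) := by
    intro m
    induction m with
    | zero => rfl
    | succ m ih => rw [sum_range_succ, ih]; split_ifs <;> omega
  rcases n with _ | n
  · rfl
  have hinit : ∀ i ∈ range n, pathRomanFun (n + 1) i = if i % 3 = 1 then 2 else 0 := by
    intro i hi
    have := mem_range.1 hi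
    unfold pathRomanFun
    split_ifs <;> omega
  rw [sum_range_succ, sum_congr rfl hinit, hsum]
  unfold pathRomanFun
  split_ifs <;> omega

theorem romanDom_pathGraph_le (n : ℕ) : romanDom (pathGraph n) ≤ (2 * n + 2) / 3 := by
  have := romanDom_le_sum (isRDF_pathRomanFun n)
  rwa [Fin.sum_univ_eq_sum_range (pathRomanFun n), sum_range_pathRomanFun] at this

theorem stmt13_general (n : ℕ) :
    romanDom (SimpleGraph.cycleGraph n) = (2 * n + 2) / 3 := by
  have hupper : romanDom (cycleGraph n) ≤ (2 * n + 2) / 3 :=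
    (romanDom_anti pathGraph_le_cycleGraph).trans (romanDom_pathGraph_le n)
  have hlower : 2 * n ≤ 3 * romanDom (cycleGraph n) := by
    simpa using two_mul_card_le_mul_romanDom cycleGraph_degree_le_two one_le_two
  omega

theorem stmt13 (n : ℕ) (hn : 3 ≤ n) :
    romanDom (SimpleGraph.cycleGraph n) = (2 * n + 2) / 3 :=
  stmt13_general n
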